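/- arXiv:2306.00846 — 2 statements merged into one kernel-verified Lean document; each statement's English description precedes it below -/
import Mathlib

section
/- For every real number λ belonging to the set {6m² + 6mn + 6n² : m, n ∈ ℤ}, one has 24 + λ(λ − 10) ≥ 0, with equality if and only if λ = 6 or λ = 4; since 4 is not in the set, equality holds exactly when λ = 6. -/
lemma aux_cases (m n : ℤ) : m ^ 2 + m * n + n ^ 2 = 0 ∨ 1 ≤ m ^ 2 + m * n + n ^ 2 := by
  rcases eq_or_ne (m ^ 2 + m * n + n ^ 2) 0 with h | h
  · exact Or.inl h
  · right
    have h0 : 0 ≤ m ^ 2 + m * n + n ^ 2 := by nlinarith [sq_nonneg (2*m+n), sq_nonneg n]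
    omega

/-- For every real number `λ` in the Laplace spectrum `{6m² + 6mn + 6n² : m, n ∈ ℤ}` of the
Clifford torus, one has `24 + λ(λ − 10) ≥ 0`; the equality `24 + λ(λ−10) = 0` holds (for a
general real `λ`) iff `λ = 6` or `λ = 4`, and since `4` is not in the spectrum, for spectral
`λ` equality holds exactly when `λ = 6`. -/
theorem stmt_2 (lam : ℝ) (hspec : ∃ m n : ℤ, lam = 6 * m ^ 2 + 6 * m * n + 6 * n ^ 2) :
    0 ≤ 24 + lam * (lam - 10) ∧
    (∀ x : ℝ, 24 + x * (x - 10) = 0 ↔ x = 6 ∨ x = 4) ∧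
    (¬ ∃ m n : ℤ, (4 : ℝ) = 6 * m ^ 2 + 6 * m * n + 6 * n ^ 2) ∧
    (24 + lam * (lam - 10) = 0 ↔ lam = 6) := by
  obtain ⟨m, n, rfl⟩ := hspec
  have hcast : (6 * (m:ℝ) ^ 2 + 6 * m * n + 6 * n ^ 2)
      = ((6 * (m ^ 2 + m * n + n ^ 2) : ℤ) : ℝ) := by push_cast; ring
  have hrange : 6 * (m:ℝ) ^ 2 + 6 * m * n + 6 * n ^ 2 = 0 ∨
      6 ≤ 6 * (m:ℝ) ^ 2 + 6 * m * n + 6 * n ^ 2 := by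
    rcases aux_cases m n with h | h
    · left; rw [hcast, h]; norm_num
    · right; rw [hcast]
      have : (6 : ℤ) ≤ 6 * (m ^ 2 + m * n + n ^ 2) := by omega
      exact_mod_cast this
  set L := 6 * (m:ℝ) ^ 2 + 6 * m * n + 6 * n ^ 2 with hL
  refine ⟨?_, ?_, ?_, ?_⟩
  · rcases hrange with h | h
    · rw [h]; norm_num
    · nlinarith
  · intro x
    constructor
    · intro h
      have : (x - 6) * (x - 4) = 0 := by nlinarith
      rcases mul_eq_zero.mp this with h1 | h1
      · left; linarith
      · right; linarith
    · rintro (rfl | rfl) <;> ring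
  · rintro ⟨a, b, hab⟩
    have : (4 : ℝ) = ((6 * (a ^ 2 + a * b + b ^ 2) : ℤ) : ℝ) := by
      rw [hab]; push_cast; ring
    have h4 : (4 : ℤ) = 6 * (a ^ 2 + a * b + b ^ 2) := by exact_mod_cast this
    omega
  · constructor
    · intro h
      have hfac : (L - 6) * (L - 4) = 0 := by nlinarith
      rcases mul_eq_zero.mp hfac with h1 | h1
      · linarith
      · exfalso
        have hL4 : L = 4 := by linarith
        rcases hrange with h2 | h2 <;> linarith
    · intro h; rw [h]; ring
end

section
/- The space of pairs of real functions (a, b) on the flat Clifford torus T², where a lies in the span of {cos(−√3t+3s), cos(−√3t−3s), sin(−√3t+3s), sin(−√3t−3s), cos(2√3t), sin(2√3t)} and b is determined by the constraint −∂a/∂s = ∂b/∂t with b also in that span, has dimension 6. Explicitly, the solutions are a = a₁cos(−√3t+3s) + a₂cos(−√3t−3s) + a₃sin(−√3t+3s) + a₄sin(−√3t−3s) + a₅cos(2√3t) + a₆sin(2√3t) and b = √3 a₁cos(−√3t+3s) − √3 a₂cos(−√3t−3s) + √3 a₃sin(−√3t+3s) − √3 a₄sin(−√3t−3s), for real constants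 a₁,…,a₆. -/
open Real

noncomputable section

/-- The six basis functions of the second eigenspace on the Clifford torus. -/
def c₁ : ℝ → ℝ → ℝ := fun t s => Real.cos (-(Real.sqrt 3) * t + 3 * s)
def c₂ : ℝ → ℝ → ℝ := fun t s => Real.cos (-(Real.sqrt 3) * t - 3 * s)
def c₃ : ℝ → ℝ → ℝ := fun t s => Real.sin (-(Real.sqrt 3) * t + 3 * s)
def c₄ : ℝ → ℝ → ℝ := fun t s => Real.sin (-(Real.sqrt 3) * t - 3 * s)
def c₅ : ℝ → ℝ → ℝ := fun t _s => Real.cos (2 * Real.sqrt 3 * t)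
def c₆ : ℝ → ℝ → ℝ := fun t _s => Real.sin (2 * Real.sqrt 3 * t)

/-- The explicit 6-parameter family of solution pairs `(a, b)`. -/
def solPair (a₁ a₂ a₃ a₄ a₅ a₆ : ℝ) : (ℝ → ℝ → ℝ) × (ℝ → ℝ → ℝ) :=
  (fun t s => a₁ * c₁ t s + a₂ * c₂ t s + a₃ * c₃ t s + a₄ * c₄ t s
      + a₅ * c₅ t s + a₆ * c₆ t s,
   fun t s => Real.sqrt 3 * a₁ * c₁ t s - Real.sqrt 3 * a₂ * c₂ t s
      + Real.sqrt 3 * a₃ * c₃ t s - Real.sqrt 3 * a₄ * c₄ t s)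

lemma indep (e₁ e₂ e₃ e₄ e₅ e₆ : ℝ)
    (h : ∀ t s : ℝ, e₁ * c₁ t s + e₂ * c₂ t s + e₃ * c₃ t s + e₄ * c₄ t s
      + e₅ * c₅ t s + e₆ * c₆ t s = 0) :
    e₁ = 0 ∧ e₂ = 0 ∧ e₃ = 0 ∧ e₄ = 0 ∧ e₅ = 0 ∧ e₆ = 0 := by
  have s3 : (0:ℝ) < Real.sqrt 3 := by positivity
  have hs3 : Real.sqrt 3 ≠ 0 := ne_of_gt s3
  have k2 : Real.sqrt 3 * (π / (2 * Real.sqrt 3)) = π / 2 := by field_simp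
  have k4 : Real.sqrt 3 * (π / (4 * Real.sqrt 3)) = π / 4 := by field_simp
  have h1 := h 0 0
  have h2 := h 0 (π/6)
  have h3 := h 0 (π/3)
  have h4 := h (π/(2*Real.sqrt 3)) 0
  have h5 := h (π/(2*Real.sqrt 3)) (π/6)
  have h6 := h (π/(4*Real.sqrt 3)) 0
  simp only [c₁, c₂, c₃, c₄, c₅, c₆, mul_zero, zero_mul, neg_mul, neg_zero, zero_add,
    add_zero, zero_sub, sub_zero, neg_add_eq_zero] at h1 h2 h3 h4 h5 h6
  rw [k2] at h4 h5
  rw [k4] at h6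
  norm_num [Real.cos_pi_div_two, Real.sin_pi_div_two, Real.cos_pi_div_four,
    Real.sin_pi_div_four, Real.cos_pi, Real.sin_pi, mul_div_assoc] at h1 h2 h3 h4 h5 h6
  have e1 : (3:ℝ)*(π/6) = π/2 := by ring
  have e2 : (3:ℝ)*(π/3) = π := by ring
  have k2' : 2*Real.sqrt 3*(π/(2*Real.sqrt 3)) = π := by field_simp
  have k4' : 2*Real.sqrt 3*(π/(4*Real.sqrt 3)) = π/2 := by field_simp; ring
  rw [e1] at h2 h5
  rw [e2] at h3
  rw [k2'] at h4 h5
  rw [k4'] at h6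
  have hpi : -(π/2) - π/2 = -π := by ring
  rw [hpi] at h5
  norm_num [Real.cos_pi, Real.sin_pi, Real.cos_pi_div_two, Real.sin_pi_div_two,
    Real.sin_neg, Real.cos_neg] at h2 h3 h4 h5 h6
  have he₅ : e₅ = 0 := by linarith
  have he₁ : e₁ = 0 := by linarith
  have he₂ : e₂ = 0 := by linarith
  have he₃ : e₃ = 0 := by linarith
  have he₄ : e₄ = 0 := by linarith
  rw [he₁, he₂, he₃, he₄] at h6
  norm_num at h6
  exact ⟨he₁, he₂, he₃, he₄, he₅, h6⟩

lemma derivS (a₁ a₂ a₃ a₄ a₅ a₆ t s : ℝ) :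
    deriv (fun u => a₁ * c₁ t u + a₂ * c₂ t u + a₃ * c₃ t u + a₄ * c₄ t u
      + a₅ * c₅ t u + a₆ * c₆ t u) s
    = -3 * a₁ * c₃ t s + 3 * a₂ * c₄ t s + 3 * a₃ * c₁ t s - 3 * a₄ * c₂ t s := by
  have l1 : HasDerivAt (fun u : ℝ => -(Real.sqrt 3) * t + 3 * u) 3 s := by
    simpa using ((hasDerivAt_id s).const_mul 3).const_add (-(Real.sqrt 3) * t)
  have l2 : HasDerivAt (fun u : ℝ => -(Real.sqrt 3) * t - 3 * u) (-3) s := by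
    simpa using ((hasDerivAt_id s).const_mul 3).const_sub (-(Real.sqrt 3) * t)
  have H : HasDerivAt (fun u => a₁ * c₁ t u + a₂ * c₂ t u + a₃ * c₃ t u + a₄ * c₄ t u
      + a₅ * c₅ t u + a₆ * c₆ t u)
      (a₁ * (-Real.sin (-(Real.sqrt 3) * t + 3 * s) * 3)
        + a₂ * (-Real.sin (-(Real.sqrt 3) * t - 3 * s) * (-3))
        + a₃ * (Real.cos (-(Real.sqrt 3) * t + 3 * s) * 3)
        + a₄ * (Real.cos (-(Real.sqrt 3) * t - 3 * s) * (-3)) + 0 + 0) s := by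
    exact (((((l1.cos.const_mul a₁).add (l2.cos.const_mul a₂)).add
      (l1.sin.const_mul a₃)).add (l2.sin.const_mul a₄)).add
      (hasDerivAt_const s (a₅ * Real.cos (2 * Real.sqrt 3 * t)))).add
      (hasDerivAt_const s (a₆ * Real.sin (2 * Real.sqrt 3 * t)))
  rw [H.deriv]
  simp only [c₁, c₂, c₃, c₄]
  ring

lemma derivT (b₁ b₂ b₃ b₄ b₅ b₆ t s : ℝ) :
    deriv (fun u => b₁ * c₁ u s + b₂ * c₂ u s + b₃ * c₃ u s + b₄ * c₄ u s
      + b₅ * c₅ u s + b₆ * c₆ u s) t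
    = Real.sqrt 3 * b₁ * c₃ t s + Real.sqrt 3 * b₂ * c₄ t s
      - Real.sqrt 3 * b₃ * c₁ t s - Real.sqrt 3 * b₄ * c₂ t s
      - 2 * Real.sqrt 3 * b₅ * c₆ t s + 2 * Real.sqrt 3 * b₆ * c₅ t s := by
  have l1 : HasDerivAt (fun u : ℝ => -(Real.sqrt 3) * u + 3 * s) (-(Real.sqrt 3)) t := by
    simpa using ((hasDerivAt_id t).const_mul (-(Real.sqrt 3))).add_const (3 * s)
  have l2 : HasDerivAt (fun u : ℝ => -(Real.sqrt 3) * u - 3 * s) (-(Real.sqrt 3)) t := by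
    simpa using ((hasDerivAt_id t).const_mul (-(Real.sqrt 3))).sub_const (3 * s)
  have l3 : HasDerivAt (fun u : ℝ => 2 * Real.sqrt 3 * u) (2 * Real.sqrt 3) t := by
    simpa using (hasDerivAt_id t).const_mul (2 * Real.sqrt 3)
  have H : HasDerivAt (fun u => b₁ * c₁ u s + b₂ * c₂ u s + b₃ * c₃ u s + b₄ * c₄ u s
      + b₅ * c₅ u s + b₆ * c₆ u s)
      (b₁ * (-Real.sin (-(Real.sqrt 3) * t + 3 * s) * (-(Real.sqrt 3)))
        + b₂ * (-Real.sin (-(Real.sqrt 3) * t - 3 * s) * (-(Real.sqrt 3)))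
        + b₃ * (Real.cos (-(Real.sqrt 3) * t + 3 * s) * (-(Real.sqrt 3)))
        + b₄ * (Real.cos (-(Real.sqrt 3) * t - 3 * s) * (-(Real.sqrt 3)))
        + b₅ * (-Real.sin (2 * Real.sqrt 3 * t) * (2 * Real.sqrt 3))
        + b₆ * (Real.cos (2 * Real.sqrt 3 * t) * (2 * Real.sqrt 3))) t := by
    exact (((((l1.cos.const_mul b₁).add (l2.cos.const_mul b₂)).add
      (l1.sin.const_mul b₃)).add (l2.sin.const_mul b₄)).add
      (l3.cos.const_mul b₅)).add (l3.sin.const_mul b₆)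
  rw [H.deriv]
  simp only [c₁, c₂, c₃, c₄, c₅, c₆]
  ring

lemma span_decomp (A : ℝ → ℝ → ℝ)
    (h : A ∈ Submodule.span ℝ ({c₁, c₂, c₃, c₄, c₅, c₆} : Set (ℝ → ℝ → ℝ))) :
    ∃ a₁ a₂ a₃ a₄ a₅ a₆ : ℝ, ∀ t s, A t s = a₁ * c₁ t s + a₂ * c₂ t s + a₃ * c₃ t s
      + a₄ * c₄ t s + a₅ * c₅ t s + a₆ * c₆ t s := by
  simp only [Submodule.mem_span_insert, Submodule.mem_span_singleton] at h
  obtain ⟨a₁, _, ⟨a₂, _, ⟨a₃, _, ⟨a₄, _, ⟨a₅, _, ⟨a₆, rfl⟩, rfl⟩, rfl⟩, rfl⟩, rfl⟩, rfl⟩ := h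
  exact ⟨a₁, a₂, a₃, a₄, a₅, a₆, fun t s => by
    simp [Pi.add_apply, Pi.smul_apply, smul_eq_mul]; ring⟩

lemma mem_span_six (a₁ a₂ a₃ a₄ a₅ a₆ : ℝ) :
    (fun t s => a₁ * c₁ t s + a₂ * c₂ t s + a₃ * c₃ t s + a₄ * c₄ t s
      + a₅ * c₅ t s + a₆ * c₆ t s)
      ∈ Submodule.span ℝ ({c₁, c₂, c₃, c₄, c₅, c₆} : Set (ℝ → ℝ → ℝ)) := by
  have : (fun t s => a₁ * c₁ t s + a₂ * c₂ t s + a₃ * c₃ t s + a₄ * c₄ t s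
      + a₅ * c₅ t s + a₆ * c₆ t s)
      = a₁ • c₁ + a₂ • c₂ + a₃ • c₃ + a₄ • c₄ + a₅ • c₅ + a₆ • c₆ := by
    funext t s; simp [Pi.add_apply, Pi.smul_apply, smul_eq_mul]
  rw [this]
  have mem : ∀ f ∈ ({c₁, c₂, c₃, c₄, c₅, c₆} : Set (ℝ → ℝ → ℝ)),
      f ∈ Submodule.span ℝ ({c₁, c₂, c₃, c₄, c₅, c₆} : Set (ℝ → ℝ → ℝ)) :=
    fun f hf => Submodule.subset_span hf
  refine Submodule.add_mem _ (Submodule.add_mem _ (Submodule.add_mem _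
    (Submodule.add_mem _ (Submodule.add_mem _ ?_ ?_) ?_) ?_) ?_) ?_ <;>
    exact Submodule.smul_mem _ _ (Submodule.subset_span (by simp))

/-- The space of pairs `(a, b)` of functions on the Clifford torus with `a, b` lying in the
span of the six second-eigenspace functions and satisfying `−∂a/∂s = ∂b/∂t` coincides with
the explicit 6-parameter family above; the parametrization is injective, so the space has
dimension 6. -/
theorem stmt_9 :
    {p : (ℝ → ℝ → ℝ) × (ℝ → ℝ → ℝ) |
        p.1 ∈ Submodule.span ℝ ({c₁, c₂, c₃, c₄, c₅, c₆} : Set (ℝ → ℝ → ℝ)) ∧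
        p.2 ∈ Submodule.span ℝ ({c₁, c₂, c₃, c₄, c₅, c₆} : Set (ℝ → ℝ → ℝ)) ∧
        ∀ t s : ℝ, -(deriv (fun u => p.1 t u) s) = deriv (fun u => p.2 u s) t} =
      {p | ∃ a₁ a₂ a₃ a₄ a₅ a₆ : ℝ, p = solPair a₁ a₂ a₃ a₄ a₅ a₆} ∧
    Function.Injective
      (fun c : Fin 6 → ℝ => solPair (c 0) (c 1) (c 2) (c 3) (c 4) (c 5)) := by
  have s3 : (0:ℝ) < Real.sqrt 3 := by positivity
  have hs3ne : Real.sqrt 3 ≠ 0 := ne_of_gt s3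
  have hs3 : Real.sqrt 3 * Real.sqrt 3 = 3 := Real.mul_self_sqrt (by norm_num)
  constructor
  · ext p
    obtain ⟨A, B⟩ := p
    simp only [Set.mem_setOf_eq]
    constructor
    · rintro ⟨h1, h2, hpde⟩
      obtain ⟨a₁, a₂, a₃, a₄, a₅, a₆, ha⟩ := span_decomp A h1
      obtain ⟨b₁, b₂, b₃, b₄, b₅, b₆, hb⟩ := span_decomp B h2
      have key : ∀ t s : ℝ,
          (-3*a₃ + Real.sqrt 3 * b₃) * c₁ t s + (3*a₄ + Real.sqrt 3 * b₄) * c₂ t s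
          + (3*a₁ - Real.sqrt 3 * b₁) * c₃ t s + (-3*a₂ - Real.sqrt 3 * b₂) * c₄ t s
          + (-(2 * Real.sqrt 3 * b₆)) * c₅ t s + (2 * Real.sqrt 3 * b₅) * c₆ t s = 0 := by
        intro t s
        have h := hpde t s
        have hAfun : (fun u => A t u) = (fun u => a₁ * c₁ t u + a₂ * c₂ t u + a₃ * c₃ t u
            + a₄ * c₄ t u + a₅ * c₅ t u + a₆ * c₆ t u) := funext fun u => ha t u
        have hBfun : (fun u => B u s) = (fun u => b₁ * c₁ u s + b₂ * c₂ u s + b₃ * c₃ u s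
            + b₄ * c₄ u s + b₅ * c₅ u s + b₆ * c₆ u s) := funext fun u => hb u s
        rw [hAfun, derivS] at h
        rw [hBfun, derivT] at h
        linear_combination h
      obtain ⟨k₁, k₂, k₃, k₄, k₅, k₆⟩ := indep _ _ _ _ _ _ key
      have hb₁ : b₁ = Real.sqrt 3 * a₁ := by
        apply mul_left_cancel₀ hs3ne; rw [← mul_assoc, hs3]; linarith
      have hb₂ : b₂ = -(Real.sqrt 3 * a₂) := by
        apply mul_left_cancel₀ hs3ne; rw [mul_neg, ← mul_assoc, hs3]; linarith
      have hb₃ : b₃ = Real.sqrt 3 * a₃ := by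
        apply mul_left_cancel₀ hs3ne; rw [← mul_assoc, hs3]; linarith
      have hb₄ : b₄ = -(Real.sqrt 3 * a₄) := by
        apply mul_left_cancel₀ hs3ne; rw [mul_neg, ← mul_assoc, hs3]; linarith
      have hb₅ : b₅ = 0 := by
        have h' : Real.sqrt 3 * b₅ = 0 := by linarith
        rcases mul_eq_zero.mp h' with h'' | h''
        · exact absurd h'' hs3ne
        · exact h''
      have hb₆ : b₆ = 0 := by
        have h' : Real.sqrt 3 * b₆ = 0 := by linarith
        rcases mul_eq_zero.mp h' with h'' | h''
        · exact absurd h'' hs3ne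
        · exact h''
      refine ⟨a₁, a₂, a₃, a₄, a₅, a₆, ?_⟩
      unfold solPair
      refine Prod.ext ?_ ?_
      · funext t s; exact ha t s
      · funext t s
        show B t s = _
        rw [hb t s, hb₁, hb₂, hb₃, hb₄, hb₅, hb₆]
        ring
    · rintro ⟨a₁, a₂, a₃, a₄, a₅, a₆, h⟩
      have hA' : A = (solPair a₁ a₂ a₃ a₄ a₅ a₆).1 := congrArg Prod.fst h
      have hB' : B = (solPair a₁ a₂ a₃ a₄ a₅ a₆).2 := congrArg Prod.snd h
      subst hA'; subst hB'
      refine ⟨mem_span_six a₁ a₂ a₃ a₄ a₅ a₆, ?_, ?_⟩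
      · have : (solPair a₁ a₂ a₃ a₄ a₅ a₆).2 = fun t s =>
            (Real.sqrt 3 * a₁) * c₁ t s + (-(Real.sqrt 3 * a₂)) * c₂ t s
            + (Real.sqrt 3 * a₃) * c₃ t s + (-(Real.sqrt 3 * a₄)) * c₄ t s
            + 0 * c₅ t s + 0 * c₆ t s := by
          funext t s; simp only [solPair]; ring
        rw [this]
        exact mem_span_six _ _ _ _ _ _
      · intro t s
        have hA : (fun u => (solPair a₁ a₂ a₃ a₄ a₅ a₆).1 t u)
            = (fun u => a₁ * c₁ t u + a₂ * c₂ t u + a₃ * c₃ t u + a₄ * c₄ t u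
              + a₅ * c₅ t u + a₆ * c₆ t u) := by funext u; simp only [solPair]
        have hB : (fun u => (solPair a₁ a₂ a₃ a₄ a₅ a₆).2 u s)
            = (fun u => (Real.sqrt 3 * a₁) * c₁ u s + (-(Real.sqrt 3 * a₂)) * c₂ u s
              + (Real.sqrt 3 * a₃) * c₃ u s + (-(Real.sqrt 3 * a₄)) * c₄ u s
              + 0 * c₅ u s + 0 * c₆ u s) := by funext u; simp only [solPair]; ring
        rw [hA, derivS, hB, derivT]
        linear_combination (-(c₃ t s * a₁ - c₄ t s * a₂ - c₁ t s * a₃ + c₂ t s * a₄)) * hs3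
  · intro c d h
    simp only at h
    have h1 : ∀ t s : ℝ, (c 0 - d 0) * c₁ t s + (c 1 - d 1) * c₂ t s + (c 2 - d 2) * c₃ t s
        + (c 3 - d 3) * c₄ t s + (c 4 - d 4) * c₅ t s + (c 5 - d 5) * c₆ t s = 0 := by
      intro t s
      have := congrArg (fun q => q.1 t s) h
      simp only [solPair] at this
      linear_combination this
    obtain ⟨k₁, k₂, k₃, k₄, k₅, k₆⟩ := indep _ _ _ _ _ _ h1
    funext i
    fin_cases i <;> simp <;> linarith

end
end
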